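/- Let N ≤ L, d ≤ N, P > 0. Let H ∈ ℂ^{N×L} be written H^H = F·C with F ∈ ℂ^{L×N} truncated unitary and C invertible; let F̂ ∈ ℂ^{L×N}, Ũ ∈ ℂ^{N×d}, V ∈ ℂ^{L×m} be truncated unitary with Ũ^H F̂^H V = 0, and set G = C^{-1} F^H F̂ Ũ and Q_I = G^H H V V^H H^H G. Then for every Hermitian positive semidefinite Q_S ∈ ℂ^{d×d}, the rates R_p = log det(I_d + (P/d)Q_S) and R_q = log det(I_d + (P/d)(Q_S + Q_I)) − log det(I_d + (P/d)Q_I) satisfy R_q ≥ R_p − d·log(1 + 2(P/d)·d_c²(F̂, F)). -/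

import Mathlib

/-!
Since `H = Cᴴ Fᴴ`, the receive filter cancels `C`, and the alignment condition `Uᴴ F̂ᴴ V = 0`
lets one subtract `Uᴴ F̂ᴴ F̂ F̂ᴴ V`, so `Gᴴ H V = Uᴴ F̂ᴴ (F Fᴴ - F̂ F̂ᴴ) V`. The outer factors are
partial isometries, hence `tr Q_I = ‖Gᴴ H V‖_F² ≤ ‖F Fᴴ - F̂ F̂ᴴ‖_F² = 2 d_c(F̂, F)²`. Every
eigenvalue of `Q_I` is at most its trace, so `det (I + (P/d) Q_I) ≤ (1 + 2 (P/d) d_c²)^d`, while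
adding the positive semidefinite `(P/d) Q_I` can only increase `det (I + (P/d) Q_S)`.
-/

open Matrix
open scoped ComplexOrder

/-- Squared Frobenius norm of a complex matrix. -/
noncomputable def frobNormSq {m n : Type*} [Fintype m] [Fintype n]
    (A : Matrix m n ℂ) : ℝ :=
  ∑ i, ∑ j, ‖A i j‖ ^ 2

/-- Squared chordal distance: `d_c(X,Y)² = (1/2) ‖X Xᴴ − Y Yᴴ‖_F²`. -/
noncomputable def chordalDistSq {L N : ℕ} (X Y : Matrix (Fin L) (Fin N) ℂ) : ℝ :=
  (1 / 2) * frobNormSq (X * Xᴴ - Y * Yᴴ)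

namespace Matrix

section Frobenius

variable {k m n : Type*} [Fintype k] [Fintype m] [Fintype n]

lemma frobNormSq_nonneg (A : Matrix m n ℂ) : 0 ≤ frobNormSq A := by
  unfold frobNormSq; positivity

lemma frobNormSq_neg (A : Matrix m n ℂ) : frobNormSq (-A) = frobNormSq A := by
  simp [frobNormSq]

lemma frobNormSq_conjTranspose (A : Matrix m n ℂ) : frobNormSq Aᴴ = frobNormSq A := by
  unfold frobNormSq
  rw [Finset.sum_comm]
  simp

lemma trace_conjTranspose_mul_self_eq_frobNormSq (A : Matrix m n ℂ) :
    (Aᴴ * A).trace = frobNormSq A := by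
  simp only [trace, diag, mul_apply, conjTranspose_apply, frobNormSq]
  push_cast
  rw [Finset.sum_comm]
  refine Finset.sum_congr rfl fun i _ => Finset.sum_congr rfl fun j _ => ?_
  exact Complex.conj_mul' _

lemma frobNormSq_mul_le_of_mul_conjTranspose_eq_one [DecidableEq k] [DecidableEq m]
    {K : Matrix k m ℂ} (hK : K * Kᴴ = 1) (B : Matrix m n ℂ) :
    frobNormSq (K * B) ≤ frobNormSq B := by
  set Q : Matrix m m ℂ := 1 - Kᴴ * K
  -- `Q` is the orthogonal projection onto the kernel of `K`.
  have hQ : Qᴴ * Q = Q := by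
    have hKK : Kᴴ * K * (Kᴴ * K) = Kᴴ * K := by
      rw [Matrix.mul_assoc, ← Matrix.mul_assoc K, hK, Matrix.one_mul]
    simp only [Q, conjTranspose_sub, conjTranspose_one, conjTranspose_mul,
      conjTranspose_conjTranspose, Matrix.sub_mul, Matrix.mul_sub, Matrix.one_mul,
      Matrix.mul_one, hKK, sub_self, sub_zero]
  have hsplit : Bᴴ * B = (K * B)ᴴ * (K * B) + (Q * B)ᴴ * (Q * B) := by
    calc Bᴴ * B = Bᴴ * (Kᴴ * K + Qᴴ * Q) * B := by rw [hQ]; simp [Q]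
      _ = _ := by simp only [conjTranspose_mul, Matrix.mul_add, Matrix.add_mul, Matrix.mul_assoc]
  have hsum : frobNormSq B = frobNormSq (K * B) + frobNormSq (Q * B) := by
    apply Complex.ofReal_injective
    push_cast
    simp only [← trace_conjTranspose_mul_self_eq_frobNormSq]
    rw [hsplit, trace_add]
  linarith [frobNormSq_nonneg (Q * B)]

lemma frobNormSq_mul_le_of_conjTranspose_mul_eq_one [DecidableEq k] [DecidableEq n]
    {W : Matrix n k ℂ} (hW : Wᴴ * W = 1) (B : Matrix m n ℂ) :
    frobNormSq (B * W) ≤ frobNormSq B := by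
  rw [← frobNormSq_conjTranspose, conjTranspose_mul, ← frobNormSq_conjTranspose B]
  exact frobNormSq_mul_le_of_mul_conjTranspose_eq_one (by rwa [conjTranspose_conjTranspose]) _

end Frobenius

section Spectral

variable {n : Type*} [Fintype n] [DecidableEq n] {A B M : Matrix n n ℂ}

lemma IsHermitian.det_one_add (hM : M.IsHermitian) :
    (1 + M).det = ∏ i, ((1 + hM.eigenvalues i : ℝ) : ℂ) := by
  conv_lhs =>
    rw [hM.spectral_theorem, ← map_one (Unitary.conjStarAlgAut ℂ _ hM.eigenvectorUnitary),
      ← map_add, Unitary.conjStarAlgAut_apply, det_mul_right_comm]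
  simp [← diagonal_one, diagonal_add, det_diagonal]

lemma PosSemidef.eigenvalues_le_re_trace (hM : M.PosSemidef) (i : n) :
    hM.1.eigenvalues i ≤ M.trace.re := by
  simp only [hM.1.trace_eq_sum_eigenvalues, Complex.re_sum]
  exact Finset.single_le_sum (fun j _ => hM.eigenvalues_nonneg j) (Finset.mem_univ i)

lemma PosSemidef.one_le_norm_det_one_add (hM : M.PosSemidef) : 1 ≤ ‖(1 + M).det‖ := by
  rw [hM.1.det_one_add, norm_prod]
  refine Finset.one_le_prod fun i _ => ?_
  rw [Complex.norm_real, Real.norm_of_nonneg (by linarith [hM.eigenvalues_nonneg i])]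
  linarith [hM.eigenvalues_nonneg i]

lemma PosSemidef.norm_det_one_add_le_of_re_trace_le (hM : M.PosSemidef) {t : ℝ}
    (ht : M.trace.re ≤ t) : ‖(1 + M).det‖ ≤ (1 + t) ^ Fintype.card n := by
  rw [hM.1.det_one_add, norm_prod, ← Finset.card_univ, ← Finset.prod_const]
  refine Finset.prod_le_prod (fun _ _ => norm_nonneg _) fun i _ => ?_
  rw [Complex.norm_real, Real.norm_of_nonneg (by linarith [hM.eigenvalues_nonneg i])]
  linarith [hM.eigenvalues_le_re_trace i]

open scoped MatrixOrder in
lemma PosDef.norm_det_le_norm_det_add (hA : A.PosDef) (hB : B.PosSemidef) :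
    ‖A.det‖ ≤ ‖(A + B).det‖ := by
  obtain ⟨R, hR, rfl⟩ :=
    CStarAlgebra.isStrictlyPositive_iff_eq_star_mul_self.mp hA.isStrictlyPositive
  have hRdet : IsUnit R.det := (isUnit_iff_isUnit_det R).mp hR
  have hfactor : star R * R + B = Rᴴ * (1 + (R⁻¹)ᴴ * B * R⁻¹) * R := by
    rw [Matrix.mul_add, Matrix.add_mul, Matrix.mul_one, star_eq_conjTranspose,
      ← Matrix.mul_assoc, ← Matrix.mul_assoc, ← conjTranspose_mul, nonsing_inv_mul _ hRdet,
      conjTranspose_one, Matrix.one_mul, Matrix.mul_assoc, nonsing_inv_mul _ hRdet,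
      Matrix.mul_one]
  rw [hfactor, det_mul, det_mul, det_mul, norm_mul, norm_mul, norm_mul,
    mul_right_comm ‖Rᴴ.det‖]
  exact le_mul_of_one_le_right (by positivity)
    (hB.conjTranspose_mul_mul_same R⁻¹).one_le_norm_det_one_add

end Spectral

end Matrix

lemma residualInterference_eq {n l d m : Type*} [Fintype n] [Fintype l] [DecidableEq n]
    {H : Matrix n l ℂ} {F Fhat : Matrix l n ℂ} {C : Matrix n n ℂ}
    {U : Matrix n d ℂ} {V : Matrix l m ℂ} (hFC : Hᴴ = F * C) (hC : IsUnit C.det)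
    (hFhat : Fhatᴴ * Fhat = 1) (hIA : Uᴴ * Fhatᴴ * V = 0) :
    (C⁻¹ * Fᴴ * Fhat * U)ᴴ * H * V = Uᴴ * Fhatᴴ * (F * Fᴴ - Fhat * Fhatᴴ) * V := by
  have hH : H = Cᴴ * Fᴴ := by rw [← conjTranspose_conjTranspose H, hFC, conjTranspose_mul]
  have hvanish : Uᴴ * Fhatᴴ * (Fhat * Fhatᴴ) * V = 0 := by
    rw [← hIA, ← Matrix.mul_assoc, Matrix.mul_assoc Uᴴ, hFhat, Matrix.mul_one]
  rw [Matrix.mul_sub, Matrix.sub_mul, hvanish, sub_zero, hH]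
  simp only [conjTranspose_mul, conjTranspose_conjTranspose, Matrix.mul_assoc]
  rw [← Matrix.mul_assoc _ Cᴴ, ← conjTranspose_mul, mul_nonsing_inv _ hC, conjTranspose_one,
    Matrix.one_mul]

lemma frobNormSq_residualInterference_le {L N d m : ℕ} {F Fhat : Matrix (Fin L) (Fin N) ℂ}
    {U : Matrix (Fin N) (Fin d) ℂ} {V : Matrix (Fin L) (Fin m) ℂ} (hFhat : Fhatᴴ * Fhat = 1)
    (hU : Uᴴ * U = 1) (hV : Vᴴ * V = 1) :
    frobNormSq (Uᴴ * Fhatᴴ * (F * Fᴴ - Fhat * Fhatᴴ) * V) ≤ 2 * chordalDistSq Fhat F := by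
  have hK : Uᴴ * Fhatᴴ * (Uᴴ * Fhatᴴ)ᴴ = 1 := by
    rw [conjTranspose_mul, conjTranspose_conjTranspose, conjTranspose_conjTranspose,
      Matrix.mul_assoc, ← Matrix.mul_assoc Fhatᴴ, hFhat, Matrix.one_mul, hU]
  calc frobNormSq (Uᴴ * Fhatᴴ * (F * Fᴴ - Fhat * Fhatᴴ) * V)
      ≤ frobNormSq ((F * Fᴴ - Fhat * Fhatᴴ) * V) := by
        rw [Matrix.mul_assoc]
        exact frobNormSq_mul_le_of_mul_conjTranspose_eq_one hK _
    _ ≤ frobNormSq (F * Fᴴ - Fhat * Fhatᴴ) := frobNormSq_mul_le_of_conjTranspose_mul_eq_one hV _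
    _ = 2 * chordalDistSq Fhat F := by
        rw [chordalDistSq, ← frobNormSq_neg, neg_sub]
        ring

theorem rate_loss_bounded_by_chordal_distance_general
    (N L d m : ℕ)
    (P : ℝ) (hP : 0 < P)
    (H : Matrix (Fin N) (Fin L) ℂ)
    (F : Matrix (Fin L) (Fin N) ℂ) (C : Matrix (Fin N) (Fin N) ℂ)
    (hFC : Hᴴ = F * C) (hC : IsUnit C.det)
    (Fhat : Matrix (Fin L) (Fin N) ℂ) (hFhat : Fhatᴴ * Fhat = 1)
    (U : Matrix (Fin N) (Fin d) ℂ) (hU : Uᴴ * U = 1)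
    (V : Matrix (Fin L) (Fin m) ℂ) (hV : Vᴴ * V = 1)
    (hIA : Uᴴ * Fhatᴴ * V = 0)
    (G : Matrix (Fin N) (Fin d) ℂ) (hG : G = C⁻¹ * Fᴴ * Fhat * U)
    (QI : Matrix (Fin d) (Fin d) ℂ) (hQI : QI = Gᴴ * H * V * Vᴴ * Hᴴ * G)
    (QS : Matrix (Fin d) (Fin d) ℂ) (hQS : QS.PosSemidef) :
    Real.log ‖(1 + ((P / d : ℝ) : ℂ) • (QS + QI)).det‖
        - Real.log ‖(1 + ((P / d : ℝ) : ℂ) • QI).det‖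
      ≥ Real.log ‖(1 + ((P / d : ℝ) : ℂ) • QS).det‖
        - d * Real.log (1 + 2 * (P / d) * chordalDistSq Fhat F) := by
  set c : ℝ := P / d
  have hc : 0 ≤ c := by positivity
  have hcC : (0 : ℂ) ≤ c := Complex.zero_le_real.mpr hc
  have hQI' : QI = (Gᴴ * H * V) * (Gᴴ * H * V)ᴴ := by
    simp only [hQI, conjTranspose_mul, conjTranspose_conjTranspose, Matrix.mul_assoc]
  have hQIpsd : QI.PosSemidef := hQI' ▸ posSemidef_self_mul_conjTranspose _
  have htrace : QI.trace.re ≤ 2 * chordalDistSq Fhat F := by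
    rw [hQI', trace_mul_comm, trace_conjTranspose_mul_self_eq_frobNormSq, Complex.ofReal_re, hG,
      residualInterference_eq hFC hC hFhat hIA]
    exact frobNormSq_residualInterference_le hFhat hU hV
  have hsignal : ‖(1 + (c : ℂ) • QS).det‖ ≤ ‖(1 + (c : ℂ) • (QS + QI)).det‖ := by
    rw [smul_add, ← add_assoc]
    exact (PosDef.one.add_posSemidef (hQS.smul hcC)).norm_det_le_norm_det_add (hQIpsd.smul hcC)
  have hinterference : ‖(1 + (c : ℂ) • QI).det‖ ≤ (1 + 2 * c * chordalDistSq Fhat F) ^ d := by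
    have htrace' : ((c : ℂ) • QI).trace.re ≤ 2 * c * chordalDistSq Fhat F := by
      rw [trace_smul, smul_eq_mul, Complex.re_ofReal_mul]
      linarith [mul_le_mul_of_nonneg_left htrace hc]
    simpa only [Fintype.card_fin] using
      (hQIpsd.smul hcC).norm_det_one_add_le_of_re_trace_le htrace'
  have hlogS := Real.log_le_log
    (zero_lt_one.trans_le (hQS.smul hcC).one_le_norm_det_one_add) hsignal
  have hlogI := Real.log_le_log
    (zero_lt_one.trans_le (hQIpsd.smul hcC).one_le_norm_det_one_add) hinterference
  rw [Real.log_pow] at hlogI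
  linarith

/-- **Lemma 4.** With quantized alignment `Ũᴴ F̂ᴴ V = 0`, receive filter
`G = C⁻¹ Fᴴ F̂ Ũ` and residual interference covariance `Q_I = Gᴴ H V Vᴴ Hᴴ G`,
the achievable rate `R_q` loses at most `d log(1 + 2(P/d) d_c(F̂,F)²)` with
respect to the interference-free rate `R_p`. -/
theorem rate_loss_bounded_by_chordal_distance
    (N L d m : ℕ) (hNL : N ≤ L) (hdN : d ≤ N) (hd : 0 < d)
    (P : ℝ) (hP : 0 < P)
    (H : Matrix (Fin N) (Fin L) ℂ)
    (F : Matrix (Fin L) (Fin N) ℂ) (C : Matrix (Fin N) (Fin N) ℂ)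
    (hFC : Hᴴ = F * C) (hF : Fᴴ * F = 1) (hC : IsUnit C.det)
    (Fhat : Matrix (Fin L) (Fin N) ℂ) (hFhat : Fhatᴴ * Fhat = 1)
    (U : Matrix (Fin N) (Fin d) ℂ) (hU : Uᴴ * U = 1)
    (V : Matrix (Fin L) (Fin m) ℂ) (hV : Vᴴ * V = 1)
    (hIA : Uᴴ * Fhatᴴ * V = 0)
    (G : Matrix (Fin N) (Fin d) ℂ) (hG : G = C⁻¹ * Fᴴ * Fhat * U)
    (QI : Matrix (Fin d) (Fin d) ℂ) (hQI : QI = Gᴴ * H * V * Vᴴ * Hᴴ * G)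
    (QS : Matrix (Fin d) (Fin d) ℂ) (hQS : QS.PosSemidef) :
    Real.log ‖(1 + ((P / d : ℝ) : ℂ) • (QS + QI)).det‖
        - Real.log ‖(1 + ((P / d : ℝ) : ℂ) • QI).det‖
      ≥ Real.log ‖(1 + ((P / d : ℝ) : ℂ) • QS).det‖
        - d * Real.log (1 + 2 * (P / d) * chordalDistSq Fhat F) :=
  rate_loss_bounded_by_chordal_distance_general N L d m P hP H F C hFC hC Fhat hFhat U hU V hV hIA G
    hG QI hQI QS hQS
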